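/- Let A = {0,1,2}, f as in the sensitive ν-CA example, and let F = {01, 12, 20, 22} be a set of forbidden 2-letter words. For any configuration x ∈ A^ℕ and i ∈ ℕ: if no word of F occurs in x at any position ≥ i, then no word of F occurs in H(x) at any position ≥ i+1, where H(x)_j = f(x_{j-1}, x_j, x_{j+1}) for j ≥ 1. -/
import Mathlib


/-- The local rule of the sensitive ν-CA example on `A = {0,1,2}`. -/
def fRule17 (x y z : Fin 3) : Fin 3 :=
  if y = 0 then (if x = 1 ∨ z = 1 then 1 else 0)
  else if y = 1 then (if x = 2 ∨ z = 2 then 2 else 1)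
  else (if x = 1 ∨ z = 1 then 0 else 2)

/-- The forbidden 2-letter words `{01, 12, 20, 22}`. -/
def Forb17 (a b : Fin 3) : Prop :=
  (a = 0 ∧ b = 1) ∨ (a = 1 ∧ b = 2) ∨ (a = 2 ∧ b = 0) ∨ (a = 2 ∧ b = 2)

instance (a b : Fin 3) : Decidable (Forb17 a b) := by
  unfold Forb17; infer_instance

lemma key17 (a b c d : Fin 3) (h1 : ¬ Forb17 a b) (h2 : ¬ Forb17 b c)
    (h3 : ¬ Forb17 c d) : ¬ Forb17 (fRule17 a b c) (fRule17 b c d) := by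
  revert h1 h2 h3
  revert a b c d
  decide

/-- If no forbidden word of `F = {01,12,20,22}` occurs in `x` at any position `≥ i`,
then none occurs in `H(x)` at any position `≥ i+1`, where
`H(x)_j = f(x_{j-1}, x_j, x_{j+1})` for `j ≥ 1`. -/
theorem stmt_17 (x y : ℕ → Fin 3)
    (hy : ∀ j : ℕ, 1 ≤ j → y j = fRule17 (x (j - 1)) (x j) (x (j + 1)))
    (i : ℕ)
    (hx : ∀ j : ℕ, i ≤ j → ¬ Forb17 (x j) (x (j + 1))) :
    ∀ j : ℕ, i + 1 ≤ j → ¬ Forb17 (y j) (y (j + 1)) := by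
  intro j hj
  have hj1 : 1 ≤ j := le_trans (Nat.le_add_left 1 i) hj
  rw [hy j hj1, hy (j + 1) (by omega)]
  have e1 : j + 1 - 1 = j := by omega
  have e2 : j - 1 + 1 = j := by omega
  rw [e1]
  exact key17 _ _ _ _
    (by have := hx (j - 1) (by omega); rwa [e2] at this)
    (hx j (by omega)) (hx (j + 1) (by omega))
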